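/- Let α, β ∈ ℝ with −1 < α + β < 2, set e = 1/(1 + α + β) and E = (e, e, e), and let b be the May–Leonard vector field b(x) = ( x₁(1 − x₁ − αx₂ − βx₃), x₂(1 − βx₁ − x₂ − αx₃), x₃(1 − αx₁ − βx₂ − x₃) ). Then E is a globally asymptotically stable equilibrium of the system dx/dt = b(x) on the open positive orthant: every solution x : [0, ∞) → Int ℝ₊³ of x'(t) = b(x(t)) with x(0) ∈ Int ℝ₊³ satisfies x(t) → E as t → ∞. -/

import Mathlib

open Filter

noncomputable section

set_option maxHeartbeats 1000000

/-- auxiliary: nonnegativity of φ -/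
lemma ml_phi_nonneg {e u : ℝ} (he : 0 < e) (hu : 0 < u) :
    0 ≤ u - e - e * Real.log u + e * Real.log e := by
  have h : Real.log (u / e) ≤ u / e - 1 := Real.log_le_sub_one_of_pos (by positivity)
  rw [Real.log_div hu.ne' he.ne'] at h
  have := mul_le_mul_of_nonneg_left h he.le
  have he' : e * (u / e - 1) = u - e := by field_simp
  nlinarith

/-- auxiliary: upper quadratic bound on φ for u ≥ m -/
lemma ml_phi_le {e u m : ℝ} (he : 0 < e) (hm : 0 < m) (hu : m ≤ u) :
    u - e - e * Real.log u + e * Real.log e ≤ (u - e)^2 / m := by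
  have hu0 : 0 < u := lt_of_lt_of_le hm hu
  have h : Real.log (e / u) ≤ e / u - 1 := Real.log_le_sub_one_of_pos (by positivity)
  rw [Real.log_div he.ne' hu0.ne'] at h
  have h2 : e * (Real.log e - Real.log u) ≤ e * (e / u - 1) :=
    mul_le_mul_of_nonneg_left h he.le
  have key : u - e - e * Real.log u + e * Real.log e ≤ (u - e)^2 / u := by
    have he' : e * (e / u - 1) = (e^2 - e*u) / u := by field_simp
    rw [he'] at h2
    have : u - e + (e^2 - e*u)/u = (u-e)^2/u := by field_simp; ring
    nlinarith
  refine key.trans ?_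
  apply div_le_div_of_nonneg_left (sq_nonneg _) hm hu

/-- auxiliary: lower bound via square roots -/
lemma ml_phi_ge_sqrt {e u : ℝ} (he : 0 < e) (hu : 0 < u) :
    (Real.sqrt u - Real.sqrt e)^2 ≤ u - e - e * Real.log u + e * Real.log e := by
  have hs : Real.log (Real.sqrt (u / e)) ≤ Real.sqrt (u / e) - 1 :=
    Real.log_le_sub_one_of_pos (Real.sqrt_pos.mpr (by positivity))
  have hls : Real.log (Real.sqrt (u / e)) = (Real.log (u/e)) / 2 := Real.log_sqrt (by positivity)
  have hld : Real.log (u/e) = Real.log u - Real.log e := Real.log_div hu.ne' he.ne'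
  have hsd : Real.sqrt (u/e) = Real.sqrt u / Real.sqrt e := Real.sqrt_div' u he.le
  have hse : (0:ℝ) < Real.sqrt e := Real.sqrt_pos.mpr he
  have h2 : e * Real.sqrt (u/e) = Real.sqrt e * Real.sqrt u := by
    rw [hsd]
    field_simp
    linear_combination (-1:ℝ) * Real.sq_sqrt he.le
  have h3 : e * Real.log (Real.sqrt (u/e)) ≤ e * (Real.sqrt (u/e) - 1) :=
    mul_le_mul_of_nonneg_left hs he.le
  rw [hls, hld] at h3
  have hsu : Real.sqrt u ^ 2 = u := Real.sq_sqrt hu.le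
  have hsee : Real.sqrt e ^ 2 = e := Real.sq_sqrt he.le
  nlinarith [h3, h2, hsu, hsee]

/-- auxiliary: coercivity at 0 -/
lemma ml_phi_coercive {e u V : ℝ} (he : 0 < e) (hu : 0 < u)
    (h : u - e - e * Real.log u + e * Real.log e ≤ V) :
    e * Real.exp (-(V + e)/e) ≤ u := by
  have h1 : e * (Real.log e - Real.log u) ≤ V + e - u := by nlinarith
  have h2 : Real.log e - Real.log u ≤ (V + e - u)/e := by
    rw [le_div_iff₀ he]; nlinarith
  have h3 : Real.log (e/u) ≤ (V + e)/e := by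
    rw [Real.log_div he.ne' hu.ne']
    refine h2.trans ?_
    rw [div_le_div_iff₀ he he]; nlinarith
  have h4 : e/u ≤ Real.exp ((V+e)/e) := by
    calc e/u = Real.exp (Real.log (e/u)) := (Real.exp_log (by positivity)).symm
    _ ≤ _ := Real.exp_le_exp.mpr h3
  have h5 : 0 < Real.exp ((V+e)/e) := Real.exp_pos _
  have h6 : e ≤ u * Real.exp ((V+e)/e) := by
    rw [div_le_iff₀ hu] at h4; linarith
  have h7 := mul_le_mul_of_nonneg_right h6 (inv_nonneg.mpr h5.le)
  rw [mul_assoc, mul_inv_cancel₀ h5.ne', mul_one] at h7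
  rw [neg_div, Real.exp_neg]
  exact h7



/-- The May–Leonard vector field. -/
def mayLeonard (α β : ℝ) (x : EuclideanSpace ℝ (Fin 3)) : EuclideanSpace ℝ (Fin 3) :=
  WithLp.toLp 2 ![x 0 * (1 - x 0 - α * x 1 - β * x 2),
    x 1 * (1 - β * x 0 - x 1 - α * x 2),
    x 2 * (1 - α * x 0 - β * x 1 - x 2)]

/-- The interior equilibrium `E = (e,e,e)`. -/
def mlEquilibrium (e : ℝ) : EuclideanSpace ℝ (Fin 3) := WithLp.toLp 2 ![e, e, e]

/-- **Statement 16.** For `−1 < α + β < 2`, the point `E = (e,e,e)` with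
`e = 1/(1+α+β)` is globally asymptotically stable on the open positive orthant:
every solution of `x' = b(x)` staying in the orthant converges to `E` as `t → ∞`. -/
theorem mayLeonard_global_stability (α β : ℝ) (h1 : -1 < α + β) (h2 : α + β < 2)
    (e : ℝ) (he : e = 1 / (1 + α + β))
    (x : ℝ → EuclideanSpace ℝ (Fin 3))
    (hpos : ∀ t ∈ Set.Ici (0:ℝ), ∀ i, 0 < x t i)
    (hode : ∀ t ∈ Set.Ici (0:ℝ),
      HasDerivWithinAt x (mayLeonard α β (x t)) (Set.Ici 0) t) :
    Tendsto x atTop (nhds (mlEquilibrium e)) := by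
  have hσ : 0 < 1 + α + β := by linarith
  have he0 : 0 < e := by rw [he]; positivity
  have hee : e * (1 + α + β) = 1 := by rw [he]; field_simp
  obtain ⟨φ, hφ⟩ : ∃ X : ℝ → ℝ, X = fun u => u - e - e * Real.log u + e * Real.log e := ⟨_, rfl⟩
  obtain ⟨g, hgdef⟩ : ∃ X : ℝ → ℝ, X = fun t => φ (x t 0) + φ (x t 1) + φ (x t 2) := ⟨_, rfl⟩
  obtain ⟨D, hDdef⟩ : ∃ X : ℝ → ℝ, X = fun t =>
      (1 - e * (x t 0)⁻¹) * (mayLeonard α β (x t) 0)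
    + (1 - e * (x t 1)⁻¹) * (mayLeonard α β (x t) 1)
    + (1 - e * (x t 2)⁻¹) * (mayLeonard α β (x t) 2) := ⟨_, rfl⟩
  -- coordinate derivatives
  have hx' : ∀ t ∈ Set.Ici (0:ℝ), ∀ i : Fin 3,
      HasDerivWithinAt (fun s => x s i) (mayLeonard α β (x t) i) (Set.Ici 0) t := by
    intro t ht i
    exact (EuclideanSpace.proj i).hasFDerivAt.comp_hasDerivWithinAt t (hode t ht)
  have hφ' : ∀ t ∈ Set.Ici (0:ℝ), ∀ i : Fin 3,
      HasDerivWithinAt (fun s => φ (x s i))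
        ((1 - e * (x t i)⁻¹) * (mayLeonard α β (x t) i)) (Set.Ici 0) t := by
    intro t ht i
    have hxi : (0:ℝ) < x t i := hpos t ht i
    have hd : HasDerivAt φ (1 - e * (x t i)⁻¹) (x t i) := by
      rw [hφ]
      have h := (((hasDerivAt_id (x t i)).sub_const e).sub
        ((Real.hasDerivAt_log hxi.ne').const_mul e)).add_const (e * Real.log e)
      convert h using 1
      all_goals rfl
    exact hd.comp_hasDerivWithinAt t (hx' t ht i)
  have hg' : ∀ t ∈ Set.Ici (0:ℝ), HasDerivWithinAt g (D t) (Set.Ici 0) t := by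
    intro t ht
    rw [hgdef, hDdef]
    exact ((hφ' t ht 0).add (hφ' t ht 1)).add (hφ' t ht 2)
  obtain ⟨c, hcdef⟩ : ∃ X : ℝ, X = min ((2 - (α + β))/2) (1 + (α + β)) := ⟨_, rfl⟩
  have hc : 0 < c := by rw [hcdef]; exact lt_min (by linarith) (by linarith)
  obtain ⟨S, hSdef⟩ : ∃ X : ℝ → ℝ, X = fun t => (x t 0 - e)^2 + (x t 1 - e)^2 + (x t 2 - e)^2 := ⟨_, rfl⟩
  have hS0 : ∀ t, 0 ≤ S t := fun t => by rw [hSdef]; positivity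
  have hDS : ∀ t ∈ Set.Ici (0:ℝ), D t ≤ -(c * S t) := by
    intro t ht
    have hp := hpos t ht 0
    have hq := hpos t ht 1
    have hr := hpos t ht 2
    rw [hDdef, hSdef]
    simp only [mayLeonard, Matrix.cons_val_zero, Matrix.cons_val_one, Matrix.head_cons,
      Matrix.cons_val_two, Matrix.tail_cons]
    have e0 : (1 - e * (x t 0)⁻¹) * (x t 0 * (1 - x t 0 - α * x t 1 - β * x t 2))
        = (x t 0 - e) * (1 - x t 0 - α * x t 1 - β * x t 2) := by field_simp
    have e1 : (1 - e * (x t 1)⁻¹) * (x t 1 * (1 - β * x t 0 - x t 1 - α * x t 2))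
        = (x t 1 - e) * (1 - β * x t 0 - x t 1 - α * x t 2) := by field_simp
    have e2 : (1 - e * (x t 2)⁻¹) * (x t 2 * (1 - α * x t 0 - β * x t 1 - x t 2))
        = (x t 2 - e) * (1 - α * x t 0 - β * x t 1 - x t 2) := by field_simp
    rw [e0, e1, e2]
    have f0 : 1 - x t 0 - α * x t 1 - β * x t 2
        = -((x t 0 - e) + α * (x t 1 - e) + β * (x t 2 - e)) := by linear_combination -hee
    have f1 : 1 - β * x t 0 - x t 1 - α * x t 2
        = -(β * (x t 0 - e) + (x t 1 - e) + α * (x t 2 - e)) := by linear_combination -hee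
    have f2 : 1 - α * x t 0 - β * x t 1 - x t 2
        = -(α * (x t 0 - e) + β * (x t 1 - e) + (x t 2 - e)) := by linear_combination -hee
    rw [f0, f1, f2]
    set u := x t 0 - e
    set v := x t 1 - e
    set w := x t 2 - e
    rcases le_or_gt 0 (α + β) with hs | hs
    · have hcle : c ≤ (2 - (α + β))/2 := by rw [hcdef]; exact min_le_left _ _
      nlinarith [mul_nonneg hs (sq_nonneg (u + v + w)),
        mul_nonneg (sub_nonneg.mpr hcle) (by positivity : (0:ℝ) ≤ u^2 + v^2 + w^2)]
    · have hcle : c ≤ 1 + (α + β) := by rw [hcdef]; exact min_le_right _ _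
      nlinarith [mul_nonneg (by linarith : (0:ℝ) ≤ -(α+β))
          (by nlinarith [sq_nonneg (u-v), sq_nonneg (v-w), sq_nonneg (w-u)] :
            (0:ℝ) ≤ (u^2+v^2+w^2) - (u*v+v*w+w*u)),
        mul_nonneg (sub_nonneg.mpr hcle) (by positivity : (0:ℝ) ≤ u^2 + v^2 + w^2)]
  have hDneg : ∀ t ∈ Set.Ici (0:ℝ), D t ≤ 0 := by
    intro t ht
    have := hDS t ht
    nlinarith [hS0 t, hc.le, mul_nonneg hc.le (hS0 t)]
  have hgcont : ContinuousOn g (Set.Ici 0) :=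
    fun t ht => (hg' t ht).continuousWithinAt
  have hanti : AntitoneOn g (Set.Ici 0) := by
    apply antitoneOn_of_hasDerivWithinAt_nonpos (convex_Ici 0) hgcont
    · intro t ht
      exact (hg' t (interior_subset ht)).mono interior_subset
    · intro t ht
      exact hDneg t (interior_subset ht)
  have hφnn : ∀ t ∈ Set.Ici (0:ℝ), ∀ i : Fin 3, 0 ≤ φ (x t i) := by
    intro t ht i
    rw [hφ]
    exact ml_phi_nonneg he0 (hpos t ht i)
  have hgle0 : ∀ t ∈ Set.Ici (0:ℝ), g t ≤ g 0 :=
    fun t ht => hanti Set.self_mem_Ici ht ht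
  have hg0 : ∀ t ∈ Set.Ici (0:ℝ), 0 ≤ g t := by
    intro t ht
    rw [hgdef]
    have h0 := hφnn t ht 0; have h1 := hφnn t ht 1; have h2 := hφnn t ht 2
    dsimp only; linarith
  obtain ⟨m, hmdef⟩ : ∃ X : ℝ, X = e * Real.exp (-(g 0 + e)/e) := ⟨_, rfl⟩
  have hm0 : 0 < m := by rw [hmdef]; positivity
  have hxm : ∀ t ∈ Set.Ici (0:ℝ), ∀ i : Fin 3, m ≤ x t i := by
    intro t ht i
    have hle : φ (x t i) ≤ g 0 := by
      refine le_trans ?_ (hgle0 t ht)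
      have h0 := hφnn t ht 0; have hh1 := hφnn t ht 1; have h2 := hφnn t ht 2
      have hgt : g t = φ (x t 0) + φ (x t 1) + φ (x t 2) := by rw [hgdef]
      fin_cases i <;> simp only [Fin.zero_eta, Fin.mk_one, Fin.reduceFinMk] <;> linarith
    rw [hφ] at hle
    rw [hmdef]
    exact ml_phi_coercive he0 (hpos t ht i) hle
  have hgleS : ∀ t ∈ Set.Ici (0:ℝ), g t ≤ S t / m := by
    intro t ht
    have b0 := ml_phi_le he0 hm0 (hxm t ht 0)
    have b1 := ml_phi_le he0 hm0 (hxm t ht 1)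
    have b2 := ml_phi_le he0 hm0 (hxm t ht 2)
    rw [hgdef, hSdef, hφ]
    dsimp only
    have : ((x t 0 - e)^2 + (x t 1 - e)^2 + (x t 2 - e)^2) / m
        = (x t 0 - e)^2/m + (x t 1 - e)^2/m + (x t 2 - e)^2/m := by ring
    rw [this]
    linarith
  obtain ⟨lam, hlamdef⟩ : ∃ X : ℝ, X = c * m := ⟨_, rfl⟩
  have hlam : 0 < lam := by rw [hlamdef]; exact mul_pos hc hm0
  have hdecay : ∀ t ∈ Set.Ici (0:ℝ), D t ≤ -(lam * g t) := by
    intro t ht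
    have h1 := hDS t ht
    have h2 := hgleS t ht
    have h3 : g t * m ≤ S t := by
      rw [le_div_iff₀ hm0] at h2; exact h2
    have h4 : c * (g t * m) ≤ c * S t := mul_le_mul_of_nonneg_left h3 hc.le
    rw [hlamdef]
    nlinarith
  have hgtend : Tendsto g atTop (nhds 0) := by
    rw [Metric.tendsto_atTop]
    intro ε hε
    obtain ⟨K, hKdef⟩ : ∃ X : ℝ, X = lam * (ε/2) := ⟨_, rfl⟩
    have hK0 : 0 < K := by rw [hKdef]; positivity
    refine ⟨max (g 0 / K + 1) 0, ?_⟩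
    intro t ht
    have ht0 : (0:ℝ) ≤ t := le_trans (le_max_right _ _) ht
    have ht1 : g 0 / K + 1 ≤ t := le_trans (le_max_left _ _) ht
    have hgt : g t ≤ ε/2 := by
      by_contra hcon
      push_neg at hcon
      have hmono : AntitoneOn (fun s => g s + K * s) (Set.Icc 0 t) := by
        apply antitoneOn_of_hasDerivWithinAt_nonpos (convex_Icc 0 t)
          (f' := fun s => D s + K)
        · exact (hgcont.mono Set.Icc_subset_Ici_self).add
            (continuous_const.mul continuous_id).continuousOn
        · intro s hs
          rw [interior_Icc] at hs ⊢
          have hlin : HasDerivAt (fun s : ℝ => K * s) K s := by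
            simpa using (hasDerivAt_id s).const_mul K
          exact ((hg' s hs.1.le).mono (fun y hy => hy.1.le)).add hlin.hasDerivWithinAt
        · intro s hs
          rw [interior_Icc] at hs
          have hsI : s ∈ Set.Ici (0:ℝ) := hs.1.le
          have hgs : g t ≤ g s := hanti hsI ht0 hs.2.le
          have hKle : K ≤ lam * g s := by
            rw [hKdef]
            apply mul_le_mul_of_nonneg_left ?_ hlam.le
            exact le_of_lt (lt_of_lt_of_le hcon hgs)
          have hds := hdecay s hsI
          linarith only [hds, hKle]
      have hev : g t + K * t ≤ g 0 + K * 0 :=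
        hmono (Set.left_mem_Icc.mpr ht0) (Set.right_mem_Icc.mpr ht0) ht0
      have hKt : g 0 + K ≤ K * t := by
        have h5 := mul_le_mul_of_nonneg_left ht1 hK0.le
        have h6 : K * (g 0 / K + 1) = g 0 + K := by field_simp
        linarith only [h5, h6]
      have hg00 := hg0 0 Set.self_mem_Ici
      have hKt0 : K * 0 = 0 := mul_zero K
      linarith only [hev, hKt, hg00, hcon, hK0, hKt0, hε]
    have : |g t - 0| < ε := by
      rw [sub_zero, abs_of_nonneg (hg0 t ht0)]; linarith only [hgt, hε]
    exact this
  -- coordinatewise convergence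
  have hφleg : ∀ t ∈ Set.Ici (0:ℝ), ∀ i : Fin 3, φ (x t i) ≤ g t := by
    intro t ht i
    have h0 := hφnn t ht 0; have hh1 := hφnn t ht 1; have h2 := hφnn t ht 2
    have hgt : g t = φ (x t 0) + φ (x t 1) + φ (x t 2) := by rw [hgdef]
    fin_cases i <;> simp only [Fin.zero_eta, Fin.mk_one, Fin.reduceFinMk] <;> linarith
  have hxi : ∀ i : Fin 3, Tendsto (fun t => x t i) atTop (nhds e) := by
    intro i
    have hsqg : Tendsto (fun t => Real.sqrt (g t)) atTop (nhds 0) := by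
      have h := (Real.continuous_sqrt.tendsto 0).comp hgtend
      simpa [Function.comp_def] using h
    have hd : Tendsto (fun t => Real.sqrt (x t i) - Real.sqrt e) atTop (nhds 0) := by
      apply squeeze_zero_norm' ?_ hsqg
      filter_upwards [eventually_ge_atTop (0:ℝ)] with t ht
      have h1 : (Real.sqrt (x t i) - Real.sqrt e)^2 ≤ g t := by
        have h2 := ml_phi_ge_sqrt he0 (hpos t ht i)
        have h3 := hφleg t ht i
        simp only [hφ] at h3
        linarith only [h2, h3]
      have h4 : |Real.sqrt (x t i) - Real.sqrt e| ≤ Real.sqrt (g t) := by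
        rw [← Real.sqrt_sq_eq_abs]
        exact Real.sqrt_le_sqrt h1
      simpa using h4
    have hsq : Tendsto (fun t => Real.sqrt (x t i)) atTop (nhds (Real.sqrt e)) := by
      have h := hd.add_const (Real.sqrt e)
      simpa using h
    have hsq2 : Tendsto (fun t => Real.sqrt (x t i) ^ 2) atTop (nhds (Real.sqrt e ^ 2)) :=
      hsq.pow 2
    rw [Real.sq_sqrt he0.le] at hsq2
    apply hsq2.congr'
    filter_upwards [eventually_ge_atTop (0:ℝ)] with t ht
    exact Real.sq_sqrt (hpos t ht i).le
  -- assemble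
  have hpi : Tendsto (fun t => (EuclideanSpace.equiv (Fin 3) ℝ) (x t)) atTop
      (nhds ((EuclideanSpace.equiv (Fin 3) ℝ) (mlEquilibrium e))) := by
    rw [tendsto_pi_nhds]
    intro i
    have hval : (EuclideanSpace.equiv (Fin 3) ℝ) (mlEquilibrium e) i = e := by
      fin_cases i <;> simp [mlEquilibrium]
    rw [hval]
    exact hxi i
  have hcomp := ((EuclideanSpace.equiv (Fin 3) ℝ).symm.continuous.tendsto _).comp hpi
  simpa [Function.comp_def] using hcomp


end
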